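/- arXiv:1309.6941 — 2 statements merged into one kernel-verified Lean document; each statement's English description precedes it below -/
import Mathlib

section
/- Let A be a C*-algebra and (π_k)_k a net in the spectrum (dual space) of A that goes to infinity, i.e. contains no convergent subnet. Then for every a ∈ A, lim_k ‖π_k(a)‖ = 0. -/
open Filter Topology

theorem tendsto_cocompact_of_forall_not_mapClusterPt {X ι : Type*} [TopologicalSpace X]
    {l : Filter ι} {u : ι → X} (h : ∀ x, ¬MapClusterPt x l u) :
    Tendsto u l (cocompact X) := by
  refine hasBasis_cocompact.tendsto_right_iff.2 fun K hK => ?_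
  by_contra hfreq
  obtain ⟨x, -, hx⟩ := hK.exists_mapClusterPt_of_frequently
    (by simpa only [Set.mem_compl_iff, not_not] using not_eventually.1 hfreq)
  exact h x hx

theorem tendsto_cocompact_nhds_zero_of_isCompact_le_norm {X E : Type*} [TopologicalSpace X]
    [SeminormedAddGroup E] {f : X → E} (hf : ∀ c : ℝ, 0 < c → IsCompact {x | c ≤ ‖f x‖}) :
    Tendsto f (cocompact X) (𝓝 0) := by
  refine Metric.tendsto_nhds.2 fun ε hε => ?_
  filter_upwards [(hf ε hε).compl_mem_cocompact] with x hx
  simpa [dist_zero_right] using hx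

theorem stmt3_general {A : Type*} [NonUnitalNormedRing A] [StarRing A]
    [NormedSpace ℂ A]
    {S : Type*} [TopologicalSpace S] {H : S → Type*} [∀ γ, NormedAddCommGroup (H γ)]
    [∀ γ, InnerProductSpace ℂ (H γ)] [∀ γ, CompleteSpace (H γ)]
    (π : ∀ γ : S, A →⋆ₙₐ[ℂ] (H γ →L[ℂ] H γ))
    (hcomp : ∀ (a : A) (c : ℝ), 0 < c → IsCompact {γ : S | c ≤ ‖π γ a‖})
    {ι : Type*} (l : Filter ι) (k : ι → S)
    (hinf : ∀ x : S, ¬ MapClusterPt x l k) :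
    ∀ a : A, Tendsto (fun i => ‖π (k i) a‖) l (𝓝 0) := fun a =>
  (tendsto_cocompact_nhds_zero_of_isCompact_le_norm (f := fun γ => ‖π γ a‖)
    (by simpa only [norm_norm] using hcomp a)).comp
      (tendsto_cocompact_of_forall_not_mapClusterPt hinf)

/-- A C*-algebra `A`, a topological space `S` modelling (part of) its spectrum
via a family of representations `π γ` on Hilbert spaces `H γ`, having the
characteristic property of the hull-kernel topology that the sets
`{γ | c ≤ ‖π γ a‖}` are (quasi-)compact.  If a net `k` (indexed by a filter `l`)
in `S` goes to infinity, i.e. has no cluster point (equivalently, no convergent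
subnet), then `‖π (k i) a‖ → 0` for every `a ∈ A`. -/
theorem stmt3 {A : Type*} [NonUnitalNormedRing A] [StarRing A] [CStarRing A]
    [NormedSpace ℂ A] [IsScalarTower ℂ A A] [SMulCommClass ℂ A A] [StarModule ℂ A]
    [CompleteSpace A]
    {S : Type*} [TopologicalSpace S] {H : S → Type*} [∀ γ, NormedAddCommGroup (H γ)]
    [∀ γ, InnerProductSpace ℂ (H γ)] [∀ γ, CompleteSpace (H γ)]
    (π : ∀ γ : S, A →⋆ₙₐ[ℂ] (H γ →L[ℂ] H γ))
    (hcomp : ∀ (a : A) (c : ℝ), 0 < c → IsCompact {γ : S | c ≤ ‖π γ a‖})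
    {ι : Type*} (l : Filter ι) [l.NeBot] (k : ι → S)
    (hinf : ∀ x : S, ¬ MapClusterPt x l k) :
    ∀ a : A, Tendsto (fun i => ‖π (k i) a‖) l (𝓝 0) :=
  stmt3_general π hcomp l k hinf
end

section
/- For ν ≠ 0, the coadjoint orbit of the linear functional ℓ_ν = (0,0,0,0,ν) under the group G_{5,3} (with coadjoint action Ad*(a,b,c,u,v)(α,β,ρ,μ,ν) = (α−μb−νu−νab/2, β+μa−νc+νa²/2, ρ+νb, μ+aν, ν)) is exactly the set {(x,y,z,w,ν) : x,y,z,w ∈ ℝ}, i.e. the full affine hyperplane of functionals taking value ν on the central element V. -/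
/-- `ℝ⁵` with coordinates `(a, b, c, u, v)`. -/
abbrev R5 : Type := ℝ × ℝ × ℝ × ℝ × ℝ

/-- The coadjoint action of `G_{5,3}`:
`Ad*(a,b,c,u,v)(α,β,ρ,μ,ν) =
  (α−μb−νu−νab/2, β+μa−νc+νa²/2, ρ+νb, μ+aν, ν)`. -/
noncomputable def ad53 (g ℓ : R5) : R5 :=
  (ℓ.1 - ℓ.2.2.2.1 * g.2.1 - ℓ.2.2.2.2 * g.2.2.2.1 - ℓ.2.2.2.2 * g.1 * g.2.1 / 2,
   ℓ.2.1 + ℓ.2.2.2.1 * g.1 - ℓ.2.2.2.2 * g.2.2.1 + ℓ.2.2.2.2 * g.1 ^ 2 / 2,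
   ℓ.2.2.1 + ℓ.2.2.2.2 * g.2.1,
   ℓ.2.2.2.1 + g.1 * ℓ.2.2.2.2,
   ℓ.2.2.2.2)

theorem ad53_snd_snd_snd_snd (g ℓ : R5) : (ad53 g ℓ).2.2.2.2 = ℓ.2.2.2.2 := rfl

/- `Ad*(g) ℓ_ν = ℓ` is triangular in `g = (a,b,c,u,v)`: the fourth coordinate determines `a`,
the third `b`, the second `c` and the first `u`, each after division by `ν`; `v` does not act. -/
noncomputable def ad53Preimage (ν : ℝ) (ℓ : R5) : R5 :=
  let a := ℓ.2.2.2.1 / ν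
  let b := ℓ.2.2.1 / ν
  (a, b, a ^ 2 / 2 - ℓ.2.1 / ν, -(ℓ.1 / ν + a * b / 2), 0)

theorem ad53_ad53Preimage {ν : ℝ} (hν : ν ≠ 0) {ℓ : R5} (hℓ : ℓ.2.2.2.2 = ν) :
    ad53 (ad53Preimage ν ℓ) (0, 0, 0, 0, ν) = ℓ := by
  obtain ⟨x, y, z, w, v⟩ := ℓ
  subst hℓ
  refine Prod.ext ?_ (Prod.ext ?_ (Prod.ext ?_ (Prod.ext ?_ rfl))) <;>
    simp only [ad53, ad53Preimage] <;> field_simp <;> ring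

/-- For `ν ≠ 0`, the coadjoint orbit of `ℓ_ν = (0,0,0,0,ν)` under `G_{5,3}` is the
full affine hyperplane `{(x,y,z,w,ν) : x,y,z,w ∈ ℝ}`. -/
theorem stmt9 (ν : ℝ) (hν : ν ≠ 0) :
    {ℓ : R5 | ∃ g : R5, ad53 g (0, 0, 0, 0, ν) = ℓ} =
      {ℓ : R5 | ℓ.2.2.2.2 = ν} := by
  ext ℓ
  constructor
  · rintro ⟨g, rfl⟩
    exact ad53_snd_snd_snd_snd g _
  · intro hℓ
    exact ⟨ad53Preimage ν ℓ, ad53_ad53Preimage hν hℓ⟩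
end
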